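/- Truncated exponential integral Lipschitz estimate: let λ > 0, fix K ≥ 0, and let h : ℝ → [0,1] be Lipschitz with constant K on [0,∞) and identically 0 on (−∞, 0). For w > 0 let T(c) = c/w for c ≥ 0. Then for all c, c' ≥ 0, |∫_0^∞ λe^{-λt}·h(c − t·w) dt − ∫_0^∞ λe^{-λt}·h(c' − t·w) dt| ≤ (1 − e^{-λ·T})·K·|c − c'| + e^{-λ·T}·λ·(|c−c'|/w), where T = min(T(c), T(c')). In particular, if K ≤ λ/w the whole expression is ≤ (λ/w)·|c − c'|. -/

import Mathlib

open Set MeasureTheory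

private lemma expInt (lam a b : ℝ) :
    ∫ t in a..b, lam * Real.exp (-(lam * t)) =
      Real.exp (-(lam * a)) - Real.exp (-(lam * b)) := by
  have hderiv : ∀ t ∈ Set.uIcc a b,
      HasDerivAt (fun s => -Real.exp (-(lam * s))) (lam * Real.exp (-(lam * t))) t := by
    intro t _
    have h1 : HasDerivAt (fun s : ℝ => -(lam * s)) (-lam) t := by
      exact (((hasDerivAt_id t).const_mul lam).neg).congr_deriv (by simp)
    have h2 := h1.exp
    have h3 : HasDerivAt (fun s => -Real.exp (-(lam * s))) (-(Real.exp (-(lam * t)) * -lam)) t := h2.neg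
    convert h3 using 1
    ring
  have hcont : IntervalIntegrable (fun t => lam * Real.exp (-(lam * t))) volume a b :=
    (by fun_prop : Continuous fun t => lam * Real.exp (-(lam * t))).intervalIntegrable _ _
  rw [intervalIntegral.integral_eq_sub_of_hasDerivAt hderiv hcont]
  ring

private lemma auxLip (lam w K : ℝ) (hlam : 0 < lam) (hw : 0 < w) (hK : 0 ≤ K)
    (h : ℝ → ℝ) (hmeas : Measurable h)
    (hrange : ∀ x, h x ∈ Set.Icc (0 : ℝ) 1)
    (hneg : ∀ x < (0 : ℝ), h x = 0)
    (hlip : ∀ x ∈ Set.Ici (0 : ℝ), ∀ y ∈ Set.Ici (0 : ℝ), |h x - h y| ≤ K * |x - y|)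
    (c c' : ℝ) (hc : 0 ≤ c) (hcc : c ≤ c') :
    |(∫ t in Set.Ioi (0 : ℝ), lam * Real.exp (-(lam * t)) * h (c - t * w)) -
        (∫ t in Set.Ioi (0 : ℝ), lam * Real.exp (-(lam * t)) * h (c' - t * w))| ≤
      (1 - Real.exp (-(lam * (c / w)))) * K * (c' - c) +
        Real.exp (-(lam * (c / w))) * lam * ((c' - c) / w) := by
  set T : ℝ := c / w with hT
  set T' : ℝ := c' / w with hT'
  have hT0 : 0 ≤ T := div_nonneg hc hw.le
  have hTT' : T ≤ T' := by rw [hT, hT']; gcongr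
  have hT'0 : 0 ≤ T' := le_trans hT0 hTT'
  -- integrability
  have hIbase : IntegrableOn (fun t : ℝ => lam * Real.exp (-(lam * t))) (Ioi 0) := by
    have := (exp_neg_integrableOn_Ioi 0 hlam).const_mul lam
    simp only [neg_mul] at this
    exact this
  have hInt : ∀ d : ℝ,
      IntegrableOn (fun t => lam * Real.exp (-(lam * t)) * h (d - t * w)) (Ioi 0) := by
    intro d
    have hm : Measurable (fun t : ℝ => lam * Real.exp (-(lam * t)) * h (d - t * w)) := by
      fun_prop
    apply hIbase.mono' hm.aestronglyMeasurable
    filter_upwards with t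
    have h1 := (hrange (d - t * w)).1
    have h2 := (hrange (d - t * w)).2
    have he : 0 < Real.exp (-(lam * t)) := Real.exp_pos _
    rw [Real.norm_eq_abs, abs_mul, abs_mul]
    rw [abs_of_pos hlam, abs_of_pos he, abs_of_nonneg h1]
    have := mul_le_of_le_one_right (mul_nonneg hlam.le he.le) h2
    linarith
  set f : ℝ → ℝ → ℝ := fun d t => lam * Real.exp (-(lam * t)) * h (d - t * w) with hf
  have hdiffInt : IntegrableOn (fun t => f c t - f c' t) (Ioi 0) := (hInt c).sub (hInt c')
  have hsub : (∫ t in Ioi (0:ℝ), f c t) - (∫ t in Ioi (0:ℝ), f c' t)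
      = ∫ t in Ioi (0:ℝ), (f c t - f c' t) := (integral_sub (hInt c) (hInt c')).symm
  rw [show (∫ t in Set.Ioi (0 : ℝ), lam * Real.exp (-(lam * t)) * h (c - t * w)) = ∫ t in Ioi (0:ℝ), f c t from rfl,
    show (∫ t in Set.Ioi (0 : ℝ), lam * Real.exp (-(lam * t)) * h (c' - t * w)) = ∫ t in Ioi (0:ℝ), f c' t from rfl,
    hsub]
  -- split the domain
  have hsplit1 : Ioc (0:ℝ) T' ∪ Ioi T' = Ioi 0 := Ioc_union_Ioi_eq_Ioi hT'0
  have hsplit2 : Ioc (0:ℝ) T ∪ Ioc T T' = Ioc 0 T' := Ioc_union_Ioc_eq_Ioc hT0 hTT'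
  have htail : (∫ t in Ioi T', (f c t - f c' t)) = 0 := by
    rw [setIntegral_congr_fun measurableSet_Ioi (g := fun _ => (0:ℝ))]
    · exact integral_zero _ _
    · intro t ht
      have h1 : c - t * w < 0 := by
        have : c' < t * w := by
          have := (div_lt_iff₀ hw).mp ht
          linarith [this]
        linarith
      have h2 : c' - t * w < 0 := by
        have : c' < t * w := by
          have := (div_lt_iff₀ hw).mp ht
          linarith [this]
        linarith
      simp [hf, hneg _ h1, hneg _ h2]
  have hI1 : IntegrableOn (fun t => f c t - f c' t) (Ioc 0 T) :=
    hdiffInt.mono_set Ioc_subset_Ioi_self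
  have hI2 : IntegrableOn (fun t => f c t - f c' t) (Ioc T T') := by
    apply hdiffInt.mono_set
    exact fun t ht => lt_of_le_of_lt hT0 ht.1
  have hI12 : IntegrableOn (fun t => f c t - f c' t) (Ioc 0 T') :=
    hdiffInt.mono_set Ioc_subset_Ioi_self
  have hItail : IntegrableOn (fun t => f c t - f c' t) (Ioi T') := by
    apply hdiffInt.mono_set
    exact fun t ht => lt_of_le_of_lt hT'0 ht
  have heq : (∫ t in Ioi (0:ℝ), (f c t - f c' t))
      = (∫ t in Ioc 0 T, (f c t - f c' t)) + (∫ t in Ioc T T', (f c t - f c' t)) := by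
    rw [← hsplit1, setIntegral_union (Ioc_disjoint_Ioi le_rfl) measurableSet_Ioi hI12 hItail,
      htail, add_zero, ← hsplit2,
      setIntegral_union (Ioc_disjoint_Ioc_of_le le_rfl) measurableSet_Ioc hI1 hI2]
  rw [heq]
  -- bound piece 1
  have hbase1 : IntegrableOn (fun t : ℝ => lam * Real.exp (-(lam * t))) (Ioc 0 T) :=
    hIbase.mono_set Ioc_subset_Ioi_self
  have hbound1 : |∫ t in Ioc 0 T, (f c t - f c' t)| ≤ (1 - Real.exp (-(lam * T))) * (K * (c' - c)) := by
    have step : |∫ t in Ioc 0 T, (f c t - f c' t)|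
        ≤ ∫ t in Ioc 0 T, lam * Real.exp (-(lam * t)) * (K * (c' - c)) := by
      rw [← Real.norm_eq_abs]
      refine (norm_integral_le_integral_norm _).trans ?_
      refine setIntegral_mono_on hI1.norm (hbase1.mul_const _) measurableSet_Ioc ?_
      intro t ht
      have hx : 0 ≤ c - t * w := by
        have : t * w ≤ c := by
          have := (le_div_iff₀ hw).mp ht.2
          linarith
        linarith
      have hy : 0 ≤ c' - t * w := by linarith
      have hl := hlip _ hx _ hy
      have habs : |c - t * w - (c' - t * w)| = c' - c := by
        rw [abs_sub_comm]
        rw [abs_of_nonneg (by linarith)]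
        ring
      rw [habs] at hl
      have he : 0 < Real.exp (-(lam * t)) := Real.exp_pos _
      have : ‖f c t - f c' t‖ = lam * Real.exp (-(lam * t)) * |h (c - t * w) - h (c' - t * w)| := by
        rw [Real.norm_eq_abs, hf]
        rw [show lam * Real.exp (-(lam * t)) * h (c - t * w) - lam * Real.exp (-(lam * t)) * h (c' - t * w)
          = lam * Real.exp (-(lam * t)) * (h (c - t * w) - h (c' - t * w)) by ring]
        rw [abs_mul, abs_mul, abs_of_pos hlam, abs_of_pos he]
      rw [this]
      have hpos : 0 ≤ lam * Real.exp (-(lam * t)) := by positivity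
      exact mul_le_mul_of_nonneg_left hl hpos
    refine step.trans_eq ?_
    rw [integral_mul_const, ← intervalIntegral.integral_of_le hT0, expInt]
    rw [mul_zero, neg_zero, Real.exp_zero]
  -- bound piece 2
  have hbound2 : |∫ t in Ioc T T', (f c t - f c' t)|
      ≤ Real.exp (-(lam * T)) - Real.exp (-(lam * T')) := by
    have hbase2 : IntegrableOn (fun t : ℝ => lam * Real.exp (-(lam * t))) (Ioc T T') := by
      apply hIbase.mono_set
      exact fun t ht => lt_of_le_of_lt hT0 ht.1
    have step : |∫ t in Ioc T T', (f c t - f c' t)|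
        ≤ ∫ t in Ioc T T', lam * Real.exp (-(lam * t)) := by
      rw [← Real.norm_eq_abs]
      refine (norm_integral_le_integral_norm _).trans ?_
      refine setIntegral_mono_on hI2.norm hbase2 measurableSet_Ioc ?_
      intro t ht
      have h1 : c - t * w < 0 := by
        have : c < t * w := by
          have := (div_lt_iff₀ hw).mp ht.1
          linarith
        linarith
      have he : 0 < Real.exp (-(lam * t)) := Real.exp_pos _
      have h2 := (hrange (c' - t * w)).1
      have h3 := (hrange (c' - t * w)).2
      rw [Real.norm_eq_abs, hf]
      simp only [hneg _ h1, mul_zero, zero_sub, abs_neg]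
      rw [abs_mul, abs_mul, abs_of_pos hlam, abs_of_pos he, abs_of_nonneg h2]
      have := mul_le_of_le_one_right (mul_nonneg hlam.le he.le) h3
      linarith
    refine step.trans_eq ?_
    rw [← intervalIntegral.integral_of_le hTT', expInt]
  have hexpT : (0:ℝ) < Real.exp (-(lam * T)) := Real.exp_pos _
  have hchain : Real.exp (-(lam * T)) - Real.exp (-(lam * T'))
      ≤ Real.exp (-(lam * T)) * lam * ((c' - c) / w) := by
    have hd : T' - T = (c' - c) / w := by
      rw [hT, hT']; field_simp
    have hfac : Real.exp (-(lam * T')) = Real.exp (-(lam * T)) * Real.exp (-(lam * (T' - T))) := by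
      rw [← Real.exp_add]; ring_nf
    have hle : 1 - Real.exp (-(lam * (T' - T))) ≤ lam * (T' - T) := by
      have := Real.add_one_le_exp (-(lam * (T' - T)))
      linarith
    calc Real.exp (-(lam * T)) - Real.exp (-(lam * T'))
        = Real.exp (-(lam * T)) * (1 - Real.exp (-(lam * (T' - T)))) := by rw [hfac]; ring
      _ ≤ Real.exp (-(lam * T)) * (lam * (T' - T)) :=
          mul_le_mul_of_nonneg_left hle hexpT.le
      _ = Real.exp (-(lam * T)) * lam * ((c' - c) / w) := by rw [hd]; ring
  calc |(∫ t in Ioc 0 T, (f c t - f c' t)) + (∫ t in Ioc T T', (f c t - f c' t))|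
      ≤ |∫ t in Ioc 0 T, (f c t - f c' t)| + |∫ t in Ioc T T', (f c t - f c' t)| := abs_add_le _ _
    _ ≤ (1 - Real.exp (-(lam * T))) * (K * (c' - c)) +
        (Real.exp (-(lam * T)) - Real.exp (-(lam * T'))) := add_le_add hbound1 hbound2
    _ ≤ (1 - Real.exp (-(lam * T))) * K * (c' - c) +
        Real.exp (-(lam * T)) * lam * ((c' - c) / w) := by
        rw [mul_assoc]
        exact add_le_add le_rfl hchain

/-- Truncated exponential integral Lipschitz estimate, with the key consequence:
if `K ≤ λ/w` then the convolution-type integral is `(λ/w)`-Lipschitz. -/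
theorem stmt_13 (lam w K : ℝ) (hlam : 0 < lam) (hw : 0 < w) (hK : 0 ≤ K)
    (h : ℝ → ℝ) (hmeas : Measurable h)
    (hrange : ∀ x, h x ∈ Set.Icc (0 : ℝ) 1)
    (hneg : ∀ x < (0 : ℝ), h x = 0)
    (hlip : ∀ x ∈ Set.Ici (0 : ℝ), ∀ y ∈ Set.Ici (0 : ℝ), |h x - h y| ≤ K * |x - y|) :
    ∀ c ∈ Set.Ici (0 : ℝ), ∀ c' ∈ Set.Ici (0 : ℝ),
      (|(∫ t in Set.Ioi (0 : ℝ), lam * Real.exp (-(lam * t)) * h (c - t * w)) -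
          (∫ t in Set.Ioi (0 : ℝ), lam * Real.exp (-(lam * t)) * h (c' - t * w))| ≤
        (1 - Real.exp (-(lam * min (c / w) (c' / w)))) * K * |c - c'| +
          Real.exp (-(lam * min (c / w) (c' / w))) * lam * (|c - c'| / w)) ∧
      (K ≤ lam / w →
        |(∫ t in Set.Ioi (0 : ℝ), lam * Real.exp (-(lam * t)) * h (c - t * w)) -
            (∫ t in Set.Ioi (0 : ℝ), lam * Real.exp (-(lam * t)) * h (c' - t * w))| ≤
          (lam / w) * |c - c'|) := by
  intro c hc c' hc'
  simp only [Set.mem_Ici] at hc hc'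
  have main : |(∫ t in Set.Ioi (0 : ℝ), lam * Real.exp (-(lam * t)) * h (c - t * w)) -
          (∫ t in Set.Ioi (0 : ℝ), lam * Real.exp (-(lam * t)) * h (c' - t * w))| ≤
        (1 - Real.exp (-(lam * min (c / w) (c' / w)))) * K * |c - c'| +
          Real.exp (-(lam * min (c / w) (c' / w))) * lam * (|c - c'| / w) := by
    rcases le_total c c' with hcc | hcc
    · have := auxLip lam w K hlam hw hK h hmeas hrange hneg hlip c c' hc hcc
      have hmin : min (c / w) (c' / w) = c / w :=
        min_eq_left (by gcongr)
      have habs : |c - c'| = c' - c := by rw [abs_sub_comm, abs_of_nonneg (by linarith)]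
      rw [hmin, habs]
      exact this
    · have := auxLip lam w K hlam hw hK h hmeas hrange hneg hlip c' c hc' hcc
      have hmin : min (c / w) (c' / w) = c' / w :=
        min_eq_right (by gcongr)
      have habs : |c - c'| = c - c' := abs_of_nonneg (by linarith)
      rw [hmin, habs, abs_sub_comm]
      exact this
  refine ⟨main, fun hKl => main.trans ?_⟩
  set E := Real.exp (-(lam * min (c / w) (c' / w))) with hE
  have hE0 : 0 < E := Real.exp_pos _
  have hE1 : E ≤ 1 := by
    have hmin0 : 0 ≤ min (c / w) (c' / w) :=
      le_min (div_nonneg hc hw.le) (div_nonneg hc' hw.le)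
    have hx : -(lam * min (c / w) (c' / w)) ≤ 0 := by
      simp only [neg_nonpos]
      exact mul_nonneg hlam.le hmin0
    calc E ≤ Real.exp 0 := Real.exp_le_exp.mpr hx
      _ = 1 := Real.exp_zero
  have habs0 : 0 ≤ |c - c'| := abs_nonneg _
  have h1 : (1 - E) * K * |c - c'| ≤ (1 - E) * (lam / w) * |c - c'| :=
    mul_le_mul_of_nonneg_right
      (mul_le_mul_of_nonneg_left hKl (by linarith)) habs0
  have h2 : E * lam * (|c - c'| / w) = E * (lam / w) * |c - c'| := by ring
  have h3 : (1 - E) * (lam / w) * |c - c'| + E * (lam / w) * |c - c'| = (lam / w) * |c - c'| := by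
    ring
  rw [h2]
  linarith
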